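/- The quadratic map f₀(x) = x² has exactly one rational iterated pre-image of the origin (namely 0), and the map f₋₁(x) = x² - 1 has exactly three rational iterated pre-images of the origin (namely 0, 1, and -1). -/

import Mathlib

/-!
If `f⁻¹' s ⊆ s` and `a ∈ s`, every iterated pre-image of `a` lies in `s`; so it suffices to find
a finite set `s ∋ 0` closed under taking pre-images, all of whose points reach `0`. For `x ↦ x²`
this is `{0}`. For `x ↦ x² - 1` it is `{0, 1, -1}`: the pre-images of `0, 1, -1` are the square
roots of `1, 2, 0`, and `2` is not a rational square.
-/

open Function Set

lemma setOf_iterate_eq_of_mapsTo_compl {α : Type*} {f : α → α} {a : α} {s : Set α}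
    (ha : a ∈ s) (hs : MapsTo f sᶜ sᶜ) (hreach : ∀ x ∈ s, ∃ N, 1 ≤ N ∧ f^[N] x = a) :
    {x | ∃ N, 1 ≤ N ∧ f^[N] x = a} = s := by
  refine Subset.antisymm ?_ hreach
  rintro x ⟨N, -, hN⟩
  by_contra hx
  exact hs.iterate N hx (hN ▸ ha)

lemma Rat.sq_ne_two (q : ℚ) : q ^ 2 ≠ 2 := by
  have h : ¬IsSquare (2 : ℚ) := by
    rw [Rat.isSquare_iff]
    norm_num
  exact fun hq => h ⟨q, by rw [← hq, sq]⟩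

lemma mapsTo_sq_compl_zero : MapsTo (fun y : ℚ => y ^ 2 + 0) {0}ᶜ {0}ᶜ := by
  intro y hy
  simpa using hy

lemma mapsTo_sq_sub_one_compl :
    MapsTo (fun y : ℚ => y ^ 2 + -1) {0, 1, -1}ᶜ {0, 1, -1}ᶜ := by
  intro y hy hfy
  simp only [mem_insert_iff, mem_singleton_iff] at hfy
  have hy' : y ≠ 0 ∧ y ≠ 1 ∧ y ≠ -1 := by simpa using hy
  rcases hfy with h | h | h
  · have : (y - 1) * (y + 1) = 0 := by linear_combination h
    rcases mul_eq_zero.mp this with h' | h'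
    · exact hy'.2.1 (by linarith)
    · exact hy'.2.2 (by linarith)
  · exact Rat.sq_ne_two y (by linarith)
  · exact hy'.1 (pow_eq_zero_iff two_ne_zero |>.mp (by linarith))

/-- The map `f₀(x) = x²` has exactly one rational iterated pre-image of the origin
(namely `0`), and `f₋₁(x) = x² - 1` has exactly three (namely `0`, `1`, `-1`). -/
theorem stmt_16 :
    {x : ℚ | ∃ N : ℕ, 1 ≤ N ∧ (fun y : ℚ => y ^ 2 + 0)^[N] x = 0} = {0} ∧
    {x : ℚ | ∃ N : ℕ, 1 ≤ N ∧ (fun y : ℚ => y ^ 2 + -1)^[N] x = 0}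
      = {0, 1, -1} := by
  constructor
  · refine setOf_iterate_eq_of_mapsTo_compl rfl mapsTo_sq_compl_zero ?_
    rintro x rfl
    exact ⟨1, le_rfl, by norm_num⟩
  · refine setOf_iterate_eq_of_mapsTo_compl (by simp) mapsTo_sq_sub_one_compl ?_
    rintro x (rfl | rfl | rfl)
    · exact ⟨2, by norm_num, by norm_num⟩
    · exact ⟨1, le_rfl, by norm_num⟩
    · exact ⟨1, le_rfl, by norm_num⟩
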